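/- arXiv:1303.3500 — 4 statements merged into one kernel-verified Lean document; each statement's English description precedes it below -/
import Mathlib

section
/- Let u, v be coprime integers such that 5 divides u^2 + 11uv - v^2. Then the 5-adic valuation of u^2 + 11uv - v^2 is exactly 2 or exactly 3. -/
/-! The discriminant of `u ^ 2 + 11 u v - v ^ 2` is `5 ^ 3`: completing the square gives
`4 (u ^ 2 + 11 u v - v ^ 2) = (2 u + 11 v) ^ 2 - 5 ^ 3 v ^ 2`. Coprimality forces `5 ∤ v`, so if `5`
divides the form then `2 u + 11 v = 5 a` and the form is `5 ^ 2 (a ^ 2 - 5 v ^ 2)` up to the unit `4`;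
the cofactor `a ^ 2 - 5 v ^ 2` is not divisible by `5 ^ 2`, since that would force `5 ∣ a` and
then `5 ∣ v`. -/

theorem Prime.not_sq_dvd_sq_sub_mul_sq {R : Type*} [CommRing R] [IsDomain R] {p a v : R}
    (hp : Prime p) (hv : ¬ p ∣ v) : ¬ p ^ 2 ∣ a ^ 2 - p * v ^ 2 := by
  intro h
  have hpa : p ∣ a := hp.dvd_of_dvd_pow (n := 2) <| by
    have := ((dvd_pow_self p two_ne_zero).trans h).add (dvd_mul_right p (v ^ 2))
    rwa [sub_add_cancel] at this
  have hpv : p * p ∣ p * v ^ 2 := by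
    have := (pow_dvd_pow_of_dvd hpa 2).sub h
    rwa [sub_sub_cancel, sq p] at this
  exact hv (hp.dvd_of_dvd_pow ((mul_dvd_mul_iff_left hp.ne_zero).mp hpv))

theorem padicValInt_eq_or_eq_succ_of_pow_dvd {p : ℕ} [Fact p.Prime] {n : ℤ} {k : ℕ}
    (hk : (p : ℤ) ^ k ∣ n) (hk2 : ¬ (p : ℤ) ^ (k + 2) ∣ n) :
    padicValInt p n = k ∨ padicValInt p n = k + 1 := by
  have hn : n ≠ 0 := by rintro rfl; exact hk2 (dvd_zero _)
  have hle : k ≤ padicValInt p n := ((padicValInt_dvd_iff k n).mp hk).resolve_left hn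
  have hlt : ¬ k + 2 ≤ padicValInt p n := fun h => hk2 ((padicValInt_dvd_iff _ n).mpr (Or.inr h))
  omega

theorem stmt_1 (u v : ℤ) (huv : IsCoprime u v)
    (hdvd : (5 : ℤ) ∣ u ^ 2 + 11 * u * v - v ^ 2) :
    padicValInt 5 (u ^ 2 + 11 * u * v - v ^ 2) = 2 ∨
      padicValInt 5 (u ^ 2 + 11 * u * v - v ^ 2) = 3 := by
  have : Fact (Nat.Prime 5) := ⟨by norm_num⟩
  have hp : Prime (5 : ℤ) := by norm_num
  set N := u ^ 2 + 11 * u * v - v ^ 2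
  have hv : ¬ (5 : ℤ) ∣ v := by
    intro h5v
    have h5u : (5 : ℤ) ∣ u := hp.dvd_of_dvd_pow (n := 2) <| by
      rw [show u ^ 2 = N - 11 * u * v + v ^ 2 by ring]
      exact (hdvd.sub (h5v.mul_left _)).add (Dvd.dvd.pow h5v two_ne_zero)
    exact hp.not_isUnit (huv.isUnit_of_dvd' h5u h5v)
  have hsq : 4 * N = (2 * u + 11 * v) ^ 2 - 5 ^ 3 * v ^ 2 := by ring
  obtain ⟨a, ha⟩ : (5 : ℤ) ∣ 2 * u + 11 * v := hp.dvd_of_dvd_pow (n := 2) <| by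
    rw [show (2 * u + 11 * v) ^ 2 = 4 * N + 5 * (25 * v ^ 2) by rw [hsq]; ring]
    exact (hdvd.mul_left 4).add (dvd_mul_right 5 _)
  have hcofactor := hp.not_sq_dvd_sq_sub_mul_sq (a := a) hv
  have h4N : 4 * N = 25 * (a ^ 2 - 5 * v ^ 2) := by rw [hsq, ha]; ring
  generalize a ^ 2 - 5 * v ^ 2 = c at hcofactor h4N
  -- `omega` moves the powers of `5` between `4 * N` and `N`, as `4` is prime to `5`
  apply padicValInt_eq_or_eq_succ_of_pow_dvd (k := 2) <;> norm_num <;> omega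
end

section
/- Let K be a field and d ∈ K with d(d^2 + 11d - 1) ≠ 0. On the elliptic curve E_d : y^2 + (d+1)xy + dy = x^3 + dx^2, the point P = (0,0) satisfies 2·P = (-d, d^2), and P has order exactly 5 in the group E_d(K). -/
/-!
The tangent to `E_d` at `P = (0, 0)` is the line `y = 0`, which meets the curve again at
`x = -d`; hence `2P = (-d, d²)`. The tangent at `2P` has slope `-d` and meets the curve again
at `(0, 0)`, so `4P = -P`. Thus `5P = 0` with `P ≠ 0`, and `P` has order 5 since 5 is prime.
-/

open WeierstrassCurve.Affine

namespace WeierstrassCurve.Affine.Point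

variable {F : Type*} [Field F] [DecidableEq F] {W : WeierstrassCurve.Affine F}

lemma two_nsmul_some_of_Y_ne {x y x' y' : F} {h : W.Nonsingular x y} (hy : y ≠ W.negY x y)
    (hx' : W.addX x x (W.slope x x y y) = x') (hy' : W.addY x x y (W.slope x x y y) = y')
    (h' : W.Nonsingular x' y') : 2 • some _ _ h = some _ _ h' := by
  subst hx' hy'
  rw [two_nsmul, add_self_of_Y_ne hy]

/-- When `a₄ = 0` the tangent at `(0, 0)` is the line `y = 0`. -/
lemma two_nsmul_some_zero_zero {x' y' : F} (ha₄ : W.a₄ = 0) (h : W.Nonsingular 0 0)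
    (hx' : -W.a₂ = x') (hy' : W.a₁ * W.a₂ - W.a₃ = y') (h' : W.Nonsingular x' y') :
    2 • some _ _ h = some _ _ h' := by
  have ha₃ : W.a₃ ≠ 0 := by simpa [ha₄] using (nonsingular_zero.mp h).2
  have hy : (0 : F) ≠ W.negY 0 0 := by simpa [negY, eq_comm] using ha₃
  refine two_nsmul_some_of_Y_ne hy ?_ ?_ h' <;>
    rw [slope_of_Y_ne rfl hy, ha₄] <;> simp [addY, negY, ← hx', ← hy']

end WeierstrassCurve.Affine.Point

lemma two_nsmul_some_neg_sq {K : Type*} [Field K] [DecidableEq K] {d : K}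
    {W : WeierstrassCurve.Affine K} (hW : W = ⟨d + 1, d, d, 0, 0⟩) (hd : d ≠ 0)
    {h : W.Nonsingular (-d) (d ^ 2)} {h₀ : W.Nonsingular 0 0} :
    2 • Point.some _ _ h = -Point.some _ _ h₀ := by
  have hy : d ^ 2 ≠ W.negY (-d) (d ^ 2) := by
    simp only [negY, hW]
    ring_nf
    exact pow_ne_zero 2 hd
  have hslope : W.slope (-d) (-d) (d ^ 2) (d ^ 2) = -d := by
    rw [slope_of_Y_ne rfl hy, div_eq_iff (sub_ne_zero.mpr hy)]
    simp only [negY, hW]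
    ring
  rw [Point.neg_some]
  refine Point.two_nsmul_some_of_Y_ne hy ?_ ?_ _ <;>
    rw [hslope] <;> simp only [addX, addY, negAddY, negY, hW] <;> ring

open Classical in
theorem stmt_4_general {K : Type*} [Field K] (d : K)
    (E : WeierstrassCurve.Affine K) (hE : E = ⟨d + 1, d, d, 0, 0⟩)
    (h00 : E.Nonsingular 0 0) (h2 : E.Nonsingular (-d) (d ^ 2)) :
    2 • (WeierstrassCurve.Affine.Point.some _ _ h00) = WeierstrassCurve.Affine.Point.some _ _ h2 ∧
      addOrderOf (WeierstrassCurve.Affine.Point.some _ _ h00) = 5 := by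
  subst hE
  have hd : d ≠ 0 := by simpa using (nonsingular_zero.mp h00).2
  have hdouble : 2 • Point.some _ _ h00 = Point.some _ _ h2 :=
    Point.two_nsmul_some_zero_zero rfl h00 rfl (by simp only; ring) h2
  have hfive : 5 • Point.some _ _ h00 = 0 := by
    rw [show 5 = 2 * 2 + 1 from rfl, add_nsmul, mul_nsmul, hdouble,
      two_nsmul_some_neg_sq rfl hd (h₀ := h00), one_nsmul, neg_add_cancel]
  have : Fact (Nat.Prime 5) := ⟨by norm_num⟩
  exact ⟨hdouble, addOrderOf_eq_prime hfive (Point.some_ne_zero h00)⟩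

open Classical in
theorem stmt_4 {K : Type*} [Field K] (d : K) (hd : d * (d ^ 2 + 11 * d - 1) ≠ 0)
    (E : WeierstrassCurve.Affine K) (hE : E = ⟨d + 1, d, d, 0, 0⟩)
    (h00 : E.Nonsingular 0 0) (h2 : E.Nonsingular (-d) (d ^ 2)) :
    2 • (WeierstrassCurve.Affine.Point.some _ _ h00) = WeierstrassCurve.Affine.Point.some _ _ h2 ∧
      addOrderOf (WeierstrassCurve.Affine.Point.some _ _ h00) = 5 :=
  stmt_4_general d E hE h00 h2
end

section
/- Let K be a field and d ∈ K with d(d^2 + 11d - 1) ≠ 0. On the elliptic curve E_d : y^2 + (d+1)xy + dy = x^3 + dx^2, the subgroup generated by (0,0) consists of the five points O, (0,0), (-d, d^2), (-d, 0), (0, -d). -/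
/-!
`E_d` is the Tate normal form `y² + (1 - c)xy - by = x³ - bx²` with `b = c = -d`. For
`P = (0, 0)` the chord-tangent law gives `2P = (-d, d²)` and `3P = (-d, 0)`, while negation
`(x, y) ↦ (x, -y - a₁x - a₃)` gives `-2P = (-d, 0)` and `-P = (0, -d)`. Hence `3P = -2P`, so `P`
has prime order `5` and its multiples are `0, P, 2P, 3P` and `4P = -P`.
-/

lemma AddSubgroup.coe_zmultiples_of_five_nsmul_eq_zero {G : Type*} [AddGroup G] {x : G}
    (h5 : 5 • x = 0) (hx : x ≠ 0) : (zmultiples x : Set G) = {0, x, 2 • x, 3 • x, 4 • x} := by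
  classical
  have : Fact (Nat.Prime 5) := ⟨Nat.prime_five⟩
  have hord : addOrderOf x = 5 := addOrderOf_eq_prime h5 hx
  have hfin : IsOfFinAddOrder x := by
    rw [← addOrderOf_pos_iff, hord]; norm_num
  ext y
  simp only [SetLike.mem_coe, hfin.mem_zmultiples_iff_mem_range_addOrderOf, hord,
    Finset.range_add_one, Finset.range_zero, insert_empty_eq, Finset.image_insert,
    Finset.image_singleton, zero_nsmul, one_nsmul, Finset.mem_insert, Finset.mem_singleton,
    Set.mem_insert_iff, Set.mem_singleton_iff]
  tauto

open WeierstrassCurve.Affine WeierstrassCurve.Affine.Point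

@[simps]
def tateNormalFive {K : Type*} [Field K] (d : K) : WeierstrassCurve.Affine K :=
  ⟨d + 1, d, d, 0, 0⟩

namespace tateNormalFive

variable {K : Type*} [Field K] {d : K}

lemma neg_origin {h₀ : (tateNormalFive d).Nonsingular 0 0}
    {h₄ : (tateNormalFive d).Nonsingular 0 (-d)} : -some _ _ h₀ = some _ _ h₄ := by
  rw [neg_some, some.injEq]
  simp [negY]

lemma neg_double {h₂ : (tateNormalFive d).Nonsingular (-d) (d ^ 2)}
    {h₃ : (tateNormalFive d).Nonsingular (-d) 0} : -some _ _ h₂ = some _ _ h₃ := by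
  rw [neg_some, some.injEq]
  simp only [negY, tateNormalFive_a₁, tateNormalFive_a₃, true_and]
  ring

variable [DecidableEq K]

lemma origin_add_origin (hd : d ≠ 0) {h₀ : (tateNormalFive d).Nonsingular 0 0}
    {h₂ : (tateNormalFive d).Nonsingular (-d) (d ^ 2)} :
    some _ _ h₀ + some _ _ h₀ = some _ _ h₂ := by
  have hy : (0 : K) ≠ (tateNormalFive d).negY 0 0 := by simpa [negY] using hd
  have hslope : (tateNormalFive d).slope 0 0 0 0 = 0 := by simp [slope_of_Y_ne rfl hy]
  rw [add_self_of_Y_ne hy, some.injEq]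
  constructor
  · simp [addX, hslope]
  · simp only [addY, negAddY, addX, negY, hslope, tateNormalFive_a₁, tateNormalFive_a₂,
      tateNormalFive_a₃]
    ring

lemma origin_add_double (hd : d ≠ 0) {h₀ : (tateNormalFive d).Nonsingular 0 0}
    {h₂ : (tateNormalFive d).Nonsingular (-d) (d ^ 2)}
    {h₃ : (tateNormalFive d).Nonsingular (-d) 0} :
    some _ _ h₀ + some _ _ h₂ = some _ _ h₃ := by
  have hx : (0 : K) ≠ -d := by simpa using hd
  have hslope : (tateNormalFive d).slope 0 (-d) 0 (d ^ 2) = -d := by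
    rw [slope_of_X_ne hx]
    field_simp
    ring
  rw [add_of_X_ne hx, some.injEq]
  constructor
  · simp only [addX, hslope, tateNormalFive_a₁, tateNormalFive_a₂]
    ring
  · simp only [addY, negAddY, addX, negY, hslope, tateNormalFive_a₁, tateNormalFive_a₂,
      tateNormalFive_a₃]
    ring

end tateNormalFive

open Classical in
theorem stmt_5 {K : Type*} [Field K] (d : K) (hd : d * (d ^ 2 + 11 * d - 1) ≠ 0)
    (E : WeierstrassCurve.Affine K) (hE : E = ⟨d + 1, d, d, 0, 0⟩)
    (h1 : E.Nonsingular 0 0) (h2 : E.Nonsingular (-d) (d ^ 2))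
    (h3 : E.Nonsingular (-d) 0) (h4 : E.Nonsingular 0 (-d)) :
    (AddSubgroup.zmultiples (WeierstrassCurve.Affine.Point.some _ _ h1) : Set E.Point) =
      {0, WeierstrassCurve.Affine.Point.some _ _ h1, WeierstrassCurve.Affine.Point.some _ _ h2,
        WeierstrassCurve.Affine.Point.some _ _ h3, WeierstrassCurve.Affine.Point.some _ _ h4} := by
  have hd0 : d ≠ 0 := left_ne_zero_of_mul hd
  obtain rfl : E = tateNormalFive d := hE
  set P := some _ _ h1
  have two_P : 2 • P = some _ _ h2 := by
    rw [two_nsmul]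
    exact tateNormalFive.origin_add_origin hd0
  have three_P : 3 • P = some _ _ h3 := by
    rw [succ_nsmul', two_P]
    exact tateNormalFive.origin_add_double hd0
  have five_P : 5 • P = 0 := by
    rw [show 5 = 3 + 2 from rfl, add_nsmul, three_P, two_P,
      ← tateNormalFive.neg_double (h₂ := h2), neg_add_cancel]
  have four_P : 4 • P = some _ _ h4 := by
    rw [← tateNormalFive.neg_origin (h₀ := h1), eq_neg_iff_add_eq_zero, ← succ_nsmul, five_P]
  rw [AddSubgroup.coe_zmultiples_of_five_nsmul_eq_zero five_P (some_ne_zero _), two_P, three_P,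
    four_P]
end

section
/- Let S be a finite set of prime numbers and define ℚ(S,5) = { x ∈ ℚ^×/(ℚ^×)^5 : v_p(x) ≡ 0 (mod 5) for all primes p ∉ S }. Then ℚ(S,5) is a finite group of order 5^{#S}. -/
/-!
A class in `ℚˣ ⧸ (ℚˣ)ⁿ` is determined by its `p`-adic valuations modulo `n`: for odd `n`, a
nonzero rational all of whose valuations are divisible by `n` is an `n`-th power, the sign being
absorbed by `(-1)ⁿ = -1`. So the valuations at the primes of `S` embed `ℚ(S, n)` into
`(ℤ/n)^S`, and the embedding is onto because `∏ p ∈ S, p ^ e p` realises every exponent vector.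
-/

theorem Nat.exists_pow_eq_of_forall_dvd_factorization {n m : ℕ} (hm : m ≠ 0)
    (h : ∀ p, p.Prime → n ∣ m.factorization p) : ∃ t : ℕ, t ^ n = m := by
  refine ⟨m.factorization.prod fun p k => p ^ (k / n), ?_⟩
  conv_rhs => rw [← Nat.prod_factorization_pow_eq_self hm]
  rw [Finsupp.prod, Finsupp.prod, ← Finset.prod_pow]
  refine Finset.prod_congr rfl fun p hp => ?_
  rw [← pow_mul, Nat.div_mul_cancel (h p (Nat.prime_of_mem_primeFactors hp))]

theorem Int.exists_pow_eq_of_forall_dvd_padicValInt {n : ℕ} (hn : Odd n) {z : ℤ} (hz : z ≠ 0)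
    (h : ∀ p, p.Prime → n ∣ padicValInt p z) : ∃ w : ℤ, w ^ n = z := by
  obtain ⟨t, ht⟩ := Nat.exists_pow_eq_of_forall_dvd_factorization (Int.natAbs_ne_zero.mpr hz)
    fun p hp => by rw [Nat.factorization_def _ hp]; exact h p hp
  rcases Int.natAbs_eq z with hz' | hz'
  · exact ⟨t, by rw [hz', ← ht, Nat.cast_pow]⟩
  · exact ⟨-t, by rw [hz', hn.neg_pow, ← ht, Nat.cast_pow]⟩

theorem Rat.exists_pow_eq_of_forall_dvd_padicValRat {n : ℕ} (hn : Odd n) {q : ℚ} (hq : q ≠ 0)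
    (h : ∀ p, p.Prime → (n : ℤ) ∣ padicValRat p q) : ∃ s : ℚ, s ^ n = q := by
  obtain ⟨m, rfl⟩ : ∃ m, n = m + 1 := Nat.exists_eq_succ_of_ne_zero hn.pos.ne'
  have hden : (q.den : ℚ) ≠ 0 := by positivity
  -- clearing denominators by an `n`-th power keeps every valuation divisible by `n`
  have hz : ((q.num * q.den ^ m : ℤ) : ℚ) = q * q.den ^ (m + 1) := by
    push_cast
    rw [← Rat.mul_den_eq_num]
    ring
  have hz0 : q.num * q.den ^ m ≠ 0 := by
    have := mul_ne_zero hq (pow_ne_zero (m + 1) hden)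
    exact_mod_cast hz ▸ this
  obtain ⟨w, hw⟩ := Int.exists_pow_eq_of_forall_dvd_padicValInt hn hz0 fun p hp => by
    have := Fact.mk hp
    have hval : (padicValInt p (q.num * q.den ^ m) : ℤ)
        = padicValRat p q + (m + 1 : ℕ) * padicValRat p q.den := by
      rw [← padicValRat.of_int, hz, padicValRat.mul hq (pow_ne_zero _ hden), padicValRat.pow]
    exact Int.natCast_dvd_natCast.mp (hval ▸ dvd_add (h p hp) (dvd_mul_right _ _))
  refine ⟨w / q.den, ?_⟩
  rw [div_pow, ← Int.cast_pow, hw, hz, mul_div_cancel_right₀ _ (pow_ne_zero _ hden)]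

instance Nat.Primes.fact_prime (p : Nat.Primes) : Fact (p : ℕ).Prime := ⟨p.2⟩

abbrev RatUnitsModPow (n : ℕ) := ℚˣ ⧸ (powMonoidHom n : ℚˣ →* ℚˣ).range

noncomputable def padicValRatUnitsMod (n : ℕ) (p : Nat.Primes) : ℚˣ →* Multiplicative (ZMod n) where
  toFun r := Multiplicative.ofAdd (padicValRat p r : ZMod n)
  map_one' := by simp
  map_mul' r s := by simp [padicValRat.mul r.ne_zero s.ne_zero, ofAdd_add]

noncomputable def padicValClassMod (n : ℕ) (p : Nat.Primes) :
    RatUnitsModPow n →* Multiplicative (ZMod n) :=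
  QuotientGroup.lift _ (padicValRatUnitsMod n p) <| by
    rintro _ ⟨u, rfl⟩
    simp [padicValRatUnitsMod, padicValRat.pow]

theorem padicValClassMod_mk (n : ℕ) (p : Nat.Primes) (r : ℚˣ) :
    padicValClassMod n p r = Multiplicative.ofAdd (padicValRat p r : ZMod n) := rfl

theorem mk_mem_ker_padicValClassMod_iff {n : ℕ} {p : Nat.Primes} {r : ℚˣ} :
    (r : RatUnitsModPow n) ∈ (padicValClassMod n p).ker ↔ (n : ℤ) ∣ padicValRat p r := by
  rw [MonoidHom.mem_ker, padicValClassMod_mk, ofAdd_eq_one, ZMod.intCast_zmod_eq_zero_iff_dvd]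

theorem mem_ker_padicValClassMod_iff {n : ℕ} {p : Nat.Primes} {x : RatUnitsModPow n} :
    x ∈ (padicValClassMod n p).ker ↔
      ∀ r : ℚˣ, (r : RatUnitsModPow n) = x → (n : ℤ) ∣ padicValRat p r := by
  refine ⟨fun h r hr => mk_mem_ker_padicValClassMod_iff.mp (hr ▸ h), fun h => ?_⟩
  obtain ⟨r, rfl⟩ := QuotientGroup.mk_surjective x
  exact mk_mem_ker_padicValClassMod_iff.mpr (h r rfl)

noncomputable def ratSelmerGroup (n : ℕ) (S : Finset ℕ) : Subgroup (RatUnitsModPow n) :=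
  ⨅ (p : Nat.Primes) (_ : (p : ℕ) ∉ S), (padicValClassMod n p).ker

theorem coe_ratSelmerGroup (n : ℕ) (S : Finset ℕ) :
    (ratSelmerGroup n S : Set (RatUnitsModPow n)) = {x | ∀ p : ℕ, p.Prime → p ∉ S →
      ∀ r : ℚˣ, (r : RatUnitsModPow n) = x → (n : ℤ) ∣ padicValRat p r} := by
  ext x
  simp only [ratSelmerGroup, SetLike.mem_coe, Subgroup.mem_iInf, mem_ker_padicValClassMod_iff,
    Set.mem_ofPred_eq]
  exact ⟨fun h p hp => h ⟨p, hp⟩, fun h p => h p p.2⟩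

theorem eq_one_of_forall_padicValClassMod_eq_one {n : ℕ} (hn : Odd n) {x : RatUnitsModPow n}
    (h : ∀ p, padicValClassMod n p x = 1) : x = 1 := by
  obtain ⟨r, rfl⟩ := QuotientGroup.mk_surjective x
  obtain ⟨s, hs⟩ := Rat.exists_pow_eq_of_forall_dvd_padicValRat hn r.ne_zero fun p hp =>
    mk_mem_ker_padicValClassMod_iff.mp (h ⟨p, hp⟩)
  have hs0 : s ≠ 0 := by
    rintro rfl
    exact r.ne_zero (by simp [← hs, hn.pos.ne'])
  exact (QuotientGroup.eq_one_iff r).mpr ⟨Units.mk0 s hs0, Units.ext (by simpa using hs)⟩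

theorem padicValRat_prod_pow {S : Finset ℕ} (hS : ∀ p ∈ S, p.Prime) (e : ℕ → ℕ) {q : ℕ}
    (hq : q.Prime) :
    padicValRat q (∏ p ∈ S, (p : ℚ) ^ e p) = if q ∈ S then (e q : ℤ) else 0 := by
  have hne : ∀ p ∈ S, p ^ e p ≠ 0 := fun p hp => pow_ne_zero _ (hS p hp).ne_zero
  have hfac : ∀ p ∈ S, (p ^ e p).factorization q = if p = q then e p else 0 := fun p hp => by
    rw [(hS p hp).factorization_pow, Finsupp.single_apply]
  have hcast : (∏ p ∈ S, (p : ℚ) ^ e p) = ((∏ p ∈ S, p ^ e p : ℕ) : ℚ) := by push_cast; rfl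
  rw [hcast, padicValRat.of_nat, ← Nat.factorization_def _ hq,
    Nat.factorization_prod hne, Finset.sum_apply', Finset.sum_congr rfl hfac, Finset.sum_ite_eq']
  split_ifs <;> rfl

namespace ratSelmerGroup

variable {n : ℕ} {S : Finset ℕ}

noncomputable def valuation (hS : ∀ p ∈ S, p.Prime) :
    ratSelmerGroup n S →* (S → Multiplicative (ZMod n)) :=
  (MonoidHom.pi fun p : S => padicValClassMod n ⟨p, hS p p.2⟩).comp (ratSelmerGroup n S).subtype

theorem valuation_injective (hn : Odd n) (hS : ∀ p ∈ S, p.Prime) :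
    Function.Injective (valuation (n := n) hS) := by
  refine (injective_iff_map_eq_one _).mpr fun x hx =>
    Subtype.ext <| eq_one_of_forall_padicValClassMod_eq_one hn fun p => ?_
  by_cases hp : (p : ℕ) ∈ S
  · exact congrFun hx ⟨p, hp⟩
  · exact Subgroup.mem_iInf.mp (Subgroup.mem_iInf.mp x.2 p) hp

theorem valuation_surjective [NeZero n] (hS : ∀ p ∈ S, p.Prime) :
    Function.Surjective (valuation (n := n) hS) := by
  intro a
  set e : ℕ → ℕ := fun p => if h : p ∈ S then (a ⟨p, h⟩).toAdd.val else 0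
  have hr : (∏ p ∈ S, (p : ℚ) ^ e p) ≠ 0 :=
    Finset.prod_ne_zero_iff.mpr fun p hp => pow_ne_zero _ (Nat.cast_ne_zero.mpr (hS p hp).ne_zero)
  have hval (q : Nat.Primes) := padicValRat_prod_pow hS e q.2
  refine ⟨⟨Units.mk0 _ hr, ?_⟩, ?_⟩
  · refine Subgroup.mem_iInf.mpr fun q => Subgroup.mem_iInf.mpr fun hq => ?_
    rw [mk_mem_ker_padicValClassMod_iff, Units.val_mk0, hval, if_neg hq]
    exact dvd_zero _
  · funext p
    change Multiplicative.ofAdd (padicValRat p (∏ p ∈ S, (p : ℚ) ^ e p) : ZMod n) = a p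
    rw [hval ⟨p, hS p p.2⟩, if_pos p.2]
    simp [e]

end ratSelmerGroup

theorem card_ratSelmerGroup {n : ℕ} (hn : Odd n) {S : Finset ℕ} (hS : ∀ p ∈ S, p.Prime) :
    Nat.card (ratSelmerGroup n S) = n ^ S.card := by
  have : NeZero n := ⟨hn.pos.ne'⟩
  rw [Nat.card_eq_of_bijective _ ⟨ratSelmerGroup.valuation_injective hn hS,
    ratSelmerGroup.valuation_surjective hS⟩, Nat.card_pi]
  simp

/-- `ℚ(S,5)`: the subgroup of `ℚ^×/(ℚ^×)^5` of classes whose `p`-adic valuation is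
divisible by `5` for all primes `p ∉ S`; it is a finite group of order `5 ^ #S`. -/
theorem stmt_14 (S : Finset ℕ) (hS : ∀ p ∈ S, p.Prime) :
    ∃ H : Subgroup (ℚˣ ⧸ (powMonoidHom 5 : ℚˣ →* ℚˣ).range),
      (H : Set (ℚˣ ⧸ (powMonoidHom 5 : ℚˣ →* ℚˣ).range)) =
        {x | ∀ p : ℕ, p.Prime → p ∉ S →
          ∀ r : ℚˣ, (QuotientGroup.mk r : ℚˣ ⧸ (powMonoidHom 5 : ℚˣ →* ℚˣ).range) = x →
            (5 : ℤ) ∣ padicValRat p (r : ℚ)} ∧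
      Nat.card H = 5 ^ S.card :=
  ⟨ratSelmerGroup 5 S, coe_ratSelmerGroup 5 S, card_ratSelmerGroup (by decide) hS⟩
end
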